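/- Let P₁, P₂ : 𝕋 → ℂ be trigonometric polynomials with P₂ real-valued, let B ⊂ ℤ be a finite nonempty set, and let c, L > 0. Suppose that |P₁(x)| ≤ P₂(x) + L for all x ∈ 𝕋, that the Fourier coefficient P̂₁(b) is real and satisfies P̂₁(b) ≥ 1 + c for every b ∈ B, and that |P̂₂(m)| ≤ 1 for every m ∈ ℤ. Then L ≥ c·|B| / ‖1̂_B‖₁². -/

import Mathlib

/-- `e(x) = e^{2πix}`. -/
noncomputable def eC (x : ℝ) : ℂ := Complex.exp (2 * Real.pi * Complex.I * x)

/-- `1̂_B(x) = ∑_{b ∈ B} e(bx)`. -/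
noncomputable def fhat (B : Finset ℤ) (x : ℝ) : ℂ := ∑ b ∈ B, eC ((b : ℝ) * x)

/-- The trigonometric polynomial with (finitely supported) coefficients `c`. -/
noncomputable def trigPoly (c : ℤ →₀ ℂ) (x : ℝ) : ℂ :=
  ∑ m ∈ c.support, c m * eC ((m : ℝ) * x)

/-! Write `h = 1̂_B`. Integrating `P₁(x + y)` against `conj h(x) conj h(y)` extracts
`∑_{b ∈ B} P̂₁(b)`, whose real part is at least `(1 + c)|B|`. Putting absolute values inside
and using `|P₁| ≤ P₂ + L`, the same double integral with weights `|h(x)| |h(y)|` is at most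
`Re ∑_m P̂₂(m) a_m² + L ‖h‖₁²`, where `a_m` are the Fourier coefficients of `|h|`; since
`|P̂₂(m)| ≤ 1`, Bessel's inequality bounds the first term by `‖h‖₂² = |B|`.
Hence `c |B| ≤ L ‖h‖₁²`. -/

open MeasureTheory Complex
open scoped ComplexConjugate

local notation "𝓕" => fourierCoeffOn (zero_lt_one' ℝ)

lemma eC_add (s t : ℝ) : eC (s + t) = eC s * eC t := by
  rw [eC, eC, eC, ← Complex.exp_add]; push_cast; ring_nf

lemma conj_eC (t : ℝ) : conj (eC t) = eC (-t) := by
  rw [eC, eC, ← Complex.exp_conj]; simp [map_ofNat]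

@[fun_prop]
lemma continuous_eC : Continuous eC := by unfold eC; fun_prop

lemma integral_eC_intCast_mul (m : ℤ) :
    ∫ x in (0:ℝ)..1, eC (m * x) = if m = 0 then 1 else 0 := by
  split_ifs with hm
  · simp [hm, eC]
  · have hc : 2 * Real.pi * I * m ≠ 0 := by simp [Real.pi_ne_zero, hm]
    simp only [eC, ofReal_mul, ofReal_intCast, ← mul_assoc]
    rw [integral_exp_mul_complex hc]
    simp [show 2 * Real.pi * I * m = m * (2 * Real.pi * I) by ring, exp_int_mul_two_pi_mul_I]

lemma fourierCoeffOn_zero_one_eq_integral (f : ℝ → ℂ) (m : ℤ) :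
    𝓕 f m = ∫ x in (0:ℝ)..1, eC (-m * x) * f x := by
  rw [fourierCoeffOn_eq_integral]
  simp only [fourier_coe_apply, eC, smul_eq_mul]
  norm_num [mul_assoc]

lemma integral_sum_eC_mul (S : Finset ℤ) (a : ℤ → ℂ) {f : ℝ → ℂ}
    (hf : IntervalIntegrable f volume 0 1) :
    ∫ x in (0:ℝ)..1, (∑ m ∈ S, a m * eC (m * x)) * f x = ∑ m ∈ S, a m * 𝓕 f (-m) := by
  simp only [Finset.sum_mul, mul_assoc]
  rw [intervalIntegral.integral_finsetSum fun m _ =>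
    (hf.continuousOn_mul (by fun_prop)).const_mul (a m)]
  simp [intervalIntegral.integral_const_mul, fourierCoeffOn_zero_one_eq_integral]

lemma fourierCoeffOn_conj_fhat (B : Finset ℤ) (m : ℤ) :
    𝓕 (fun x => conj (fhat B x)) (-m) = if m ∈ B then 1 else 0 := by
  have hexp (x : ℝ) : eC (m * x) * conj (fhat B x) = ∑ b ∈ B, eC ((m - b : ℤ) * x) := by
    simp only [fhat, map_sum, Finset.mul_sum, conj_eC, ← eC_add]
    push_cast; ring_nf
  rw [fourierCoeffOn_zero_one_eq_integral]
  simp only [Int.cast_neg, neg_neg, hexp]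
  rw [intervalIntegral.integral_finsetSum fun b _ =>
    (by fun_prop : Continuous fun x : ℝ => eC ((m - b : ℤ) * x)).intervalIntegrable _ _]
  simp only [integral_eC_intCast_mul, sub_eq_zero, Finset.sum_ite_eq]

lemma integral_norm_fhat_sq (B : Finset ℤ) : ∫ x in (0:ℝ)..1, ‖fhat B x‖ ^ 2 = B.card := by
  have key := integral_sum_eC_mul B (fun _ => 1) (f := fun x => conj (fhat B x))
    ((by unfold fhat; fun_prop : Continuous fun x => conj (fhat B x)).intervalIntegrable _ _)
  simp only [one_mul, ← fhat.eq_1, Complex.mul_conj, fourierCoeffOn_conj_fhat] at key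
  apply Complex.ofReal_injective
  rw [← intervalIntegral.integral_ofReal]
  simpa [Complex.normSq_eq_norm_sq] using key

lemma sum_norm_fourierCoeffOn_sq_le {a b : ℝ} (hab : a < b) {f : ℝ → ℂ} (hf : Continuous f)
    (S : Finset ℤ) :
    ∑ m ∈ S, ‖fourierCoeffOn hab f m‖ ^ 2 ≤ (b - a)⁻¹ • ∫ x in a..b, ‖f x‖ ^ 2 := by
  obtain ⟨C, hC⟩ := (isCompact_Icc (a := a) (b := b)).exists_bound_of_continuousOn hf.continuousOn
  have hL2 : MemLp f 2 (volume.restrict (Set.Ioc a b)) :=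
    .of_bound hf.aestronglyMeasurable C <| ae_restrict_of_forall_mem measurableSet_Ioc
      fun x hx => hC x (Set.Ioc_subset_Icc_self hx)
  exact sum_le_hasSum S (fun _ _ => by positivity) (hasSum_sq_fourierCoeffOn hab hL2)

lemma integral_trigPoly_add_mul (c : ℤ →₀ ℂ) {f : ℝ → ℂ} (hf : IntervalIntegrable f volume 0 1)
    (y : ℝ) :
    ∫ x in (0:ℝ)..1, trigPoly c (x + y) * f x =
      ∑ m ∈ c.support, c m * 𝓕 f (-m) * eC (m * y) := by
  have hshift (x : ℝ) :
      trigPoly c (x + y) = ∑ m ∈ c.support, c m * eC (m * y) * eC (m * x) := by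
    simp only [trigPoly, mul_add, eC_add, mul_assoc, mul_comm (eC (_ * x))]
  simp only [hshift, integral_sum_eC_mul _ _ hf]
  exact Finset.sum_congr rfl fun m _ => by ring

lemma integral_integral_trigPoly_add_mul (c : ℤ →₀ ℂ) {f g : ℝ → ℂ}
    (hf : IntervalIntegrable f volume 0 1) (hg : IntervalIntegrable g volume 0 1) :
    ∫ y in (0:ℝ)..1, (∫ x in (0:ℝ)..1, trigPoly c (x + y) * f x) * g y =
      ∑ m ∈ c.support, c m * 𝓕 f (-m) * 𝓕 g (-m) := by
  simp only [integral_trigPoly_add_mul c hf, integral_sum_eC_mul _ _ hg]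

lemma norm_integral_mul_le_re_integral {a b : ℝ} (hab : a ≤ b) {F G k : ℝ → ℂ}
    (hF : Continuous F) (hG : Continuous G) (hk : Continuous k)
    (hFG : ∀ x, ‖F x‖ ≤ (G x).re) :
    ‖∫ x in a..b, F x * k x‖ ≤ (∫ x in a..b, G x * ‖k x‖).re := by
  calc ‖∫ x in a..b, F x * k x‖ ≤ ∫ x in a..b, ‖F x * k x‖ :=
        intervalIntegral.norm_integral_le_integral_norm hab
    _ ≤ ∫ x in a..b, (G x * ‖k x‖).re := by
        refine intervalIntegral.integral_mono_on hab
          ((by fun_prop : Continuous _).intervalIntegrable _ _)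
          ((by fun_prop : Continuous _).intervalIntegrable _ _) fun x _ => ?_
        rw [norm_mul, re_mul_ofReal]
        exact mul_le_mul_of_nonneg_right (hFG x) (norm_nonneg _)
    _ = (∫ x in a..b, G x * ‖k x‖).re :=
        reCLM.intervalIntegral_comp_comm (f := fun x => G x * ‖k x‖)
          ((by fun_prop : Continuous _).intervalIntegrable _ _)

lemma norm_integral_integral_add_mul_le_re {a b : ℝ} (hab : a ≤ b) {F G k l : ℝ → ℂ}
    (hF : Continuous F) (hG : Continuous G) (hk : Continuous k) (hl : Continuous l)
    (hFG : ∀ z, ‖F z‖ ≤ (G z).re) :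
    ‖∫ y in a..b, (∫ x in a..b, F (x + y) * k x) * l y‖ ≤
      (∫ y in a..b, (∫ x in a..b, G (x + y) * ‖k x‖) * ‖l y‖).re :=
  norm_integral_mul_le_re_integral hab (by fun_prop) (by fun_prop) hl fun y =>
    norm_integral_mul_le_re_integral hab (by fun_prop) (by fun_prop) hk fun x => hFG (x + y)

lemma integral_integral_add_const_mul {a b : ℝ} {F w : ℝ → ℂ} (hF : Continuous F)
    (hw : Continuous w) (L : ℂ) :
    ∫ y in a..b, (∫ x in a..b, (F (x + y) + L) * w x) * w y =
      (∫ y in a..b, (∫ x in a..b, F (x + y) * w x) * w y) + L * (∫ x in a..b, w x) ^ 2 := by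
  have hint {f : ℝ → ℂ} (hf : Continuous f) : IntervalIntegrable f volume a b :=
    hf.intervalIntegrable _ _
  have hinner (y : ℝ) : ∫ x in a..b, (F (x + y) + L) * w x =
      (∫ x in a..b, F (x + y) * w x) + L * ∫ x in a..b, w x := by
    simp only [add_mul]
    rw [intervalIntegral.integral_add (hint (by fun_prop)) (hint (by fun_prop)),
      intervalIntegral.integral_const_mul]
  simp only [hinner]
  simp only [add_mul]
  rw [intervalIntegral.integral_add (hint (by fun_prop)) (hint (by fun_prop)),
    intervalIntegral.integral_const_mul, sq, mul_assoc]

lemma sum_eq_integral_integral_trigPoly_conj_fhat (c : ℤ →₀ ℂ) (B : Finset ℤ) :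
    ∑ b ∈ B, c b = ∫ y in (0:ℝ)..1,
      (∫ x in (0:ℝ)..1, trigPoly c (x + y) * conj (fhat B x)) * conj (fhat B y) := by
  have hint : IntervalIntegrable (fun x => conj (fhat B x)) volume 0 1 :=
    (by unfold fhat; fun_prop : Continuous _).intervalIntegrable _ _
  rw [integral_integral_trigPoly_add_mul c hint hint]
  simp only [fourierCoeffOn_conj_fhat, mul_ite, mul_one, mul_zero, Finset.sum_ite_mem,
    Finset.inter_assoc, Finset.inter_self]
  exact (Finset.sum_subset Finset.inter_subset_right fun m hmB hm =>
    Finsupp.notMem_support_iff.1 fun h => hm (Finset.mem_inter.2 ⟨h, hmB⟩)).symm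

lemma norm_integral_integral_trigPoly_add_mul_le {c : ℤ →₀ ℂ} (hc : ∀ m, ‖c m‖ ≤ 1)
    {f : ℝ → ℂ} (hf : Continuous f) :
    ‖∫ y in (0:ℝ)..1, (∫ x in (0:ℝ)..1, trigPoly c (x + y) * f x) * f y‖ ≤
      ∫ x in (0:ℝ)..1, ‖f x‖ ^ 2 := by
  have hint := hf.intervalIntegrable (μ := volume) 0 1
  rw [integral_integral_trigPoly_add_mul c hint hint]
  calc ‖∑ m ∈ c.support, c m * 𝓕 f (-m) * 𝓕 f (-m)‖
      ≤ ∑ m ∈ c.support, ‖𝓕 f (-m)‖ ^ 2 := by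
        refine (norm_sum_le _ _).trans (Finset.sum_le_sum fun m _ => ?_)
        rw [norm_mul, norm_mul, sq, mul_assoc]
        exact mul_le_of_le_one_left (by positivity) (hc m)
    _ ≤ ∫ x in (0:ℝ)..1, ‖f x‖ ^ 2 := by
        simpa using sum_norm_fourierCoeffOn_sq_le (zero_lt_one' ℝ) hf
          (c.support.map (Equiv.neg ℤ).toEmbedding)

lemma norm_sum_le_card_add_mul_integral_norm_fhat_sq {c₁ c₂ : ℤ →₀ ℂ} {L : ℝ}
    (hdom : ∀ x, ‖trigPoly c₁ x‖ ≤ (trigPoly c₂ x).re + L) (hc₂ : ∀ m, ‖c₂ m‖ ≤ 1)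
    (B : Finset ℤ) :
    ‖∑ b ∈ B, c₁ b‖ ≤ B.card + L * (∫ x in (0:ℝ)..1, ‖fhat B x‖) ^ 2 := by
  have hP₁ : Continuous (trigPoly c₁) := by unfold trigPoly; fun_prop
  have hP₂ : Continuous (trigPoly c₂) := by unfold trigPoly; fun_prop
  have hh : Continuous (fhat B) := by unfold fhat; fun_prop
  set u : ℝ → ℂ := fun x => (‖fhat B x‖ : ℂ)
  have hu : Continuous u := by fun_prop
  have hk : Continuous fun x => conj (fhat B x) := by fun_prop
  have key := norm_integral_integral_add_mul_le_re zero_le_one hP₁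
    (G := fun z => trigPoly c₂ z + L) (by fun_prop) hk hk fun z => by simpa using hdom z
  simp only [RCLike.norm_conj] at key
  rw [← sum_eq_integral_integral_trigPoly_conj_fhat, integral_integral_add_const_mul hP₂ hu,
    intervalIntegral.integral_ofReal, add_re] at key
  calc ‖∑ b ∈ B, c₁ b‖
      ≤ ‖∫ y in (0:ℝ)..1, (∫ x in (0:ℝ)..1, trigPoly c₂ (x + y) * u x) * u y‖ +
          L * (∫ x in (0:ℝ)..1, ‖fhat B x‖) ^ 2 := by
        refine key.trans (add_le_add (re_le_norm _) (le_of_eq ?_))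
        norm_cast
    _ ≤ (∫ x in (0:ℝ)..1, ‖u x‖ ^ 2) + L * (∫ x in (0:ℝ)..1, ‖fhat B x‖) ^ 2 := by
        gcongr
        exact norm_integral_integral_trigPoly_add_mul_le hc₂ hu
    _ = B.card + L * (∫ x in (0:ℝ)..1, ‖fhat B x‖) ^ 2 := by
        simp [u, integral_norm_fhat_sq]

theorem hh_trick_general (c₁ c₂ : ℤ →₀ ℂ) (B : Finset ℤ)
    (c L : ℝ) (hL : 0 < L)
    (hdom : ∀ x : ℝ, ‖trigPoly c₁ x‖ ≤ (trigPoly c₂ x).re + L)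
    (hP1 : ∀ b ∈ B, (c₁ b).im = 0 ∧ 1 + c ≤ (c₁ b).re)
    (hP2 : ∀ m : ℤ, ‖c₂ m‖ ≤ 1) :
    c * (B.card : ℝ) / (∫ x in (0:ℝ)..1, ‖fhat B x‖) ^ 2 ≤ L := by
  have hlower : (1 + c) * B.card ≤ ‖∑ b ∈ B, c₁ b‖ :=
    calc (1 + c) * B.card = ∑ _b ∈ B, (1 + c) := by simp; ring
      _ ≤ ∑ b ∈ B, (c₁ b).re := Finset.sum_le_sum fun b hb => (hP1 b hb).2
      _ = (∑ b ∈ B, c₁ b).re := (re_sum _ _).symm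
      _ ≤ ‖∑ b ∈ B, c₁ b‖ := re_le_norm _
  have hupper := norm_sum_le_card_add_mul_integral_norm_fhat_sq hdom hP2 B
  exact div_le_of_le_mul₀ (sq_nonneg _) hL.le (by linarith)

/-- The `h*h`-trick: if `|P₁| ≤ P₂ + L` pointwise, `P̂₁(b) ≥ 1 + c` for `b ∈ B`,
and `|P̂₂(m)| ≤ 1` for all `m`, then `L ≥ c|B|/‖1̂_B‖₁²`. -/
theorem hh_trick (c₁ c₂ : ℤ →₀ ℂ) (B : Finset ℤ) (hB : B.Nonempty)
    (c L : ℝ) (hc : 0 < c) (hL : 0 < L)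
    (hreal : ∀ x : ℝ, (trigPoly c₂ x).im = 0)
    (hdom : ∀ x : ℝ, ‖trigPoly c₁ x‖ ≤ (trigPoly c₂ x).re + L)
    (hP1 : ∀ b ∈ B, (c₁ b).im = 0 ∧ 1 + c ≤ (c₁ b).re)
    (hP2 : ∀ m : ℤ, ‖c₂ m‖ ≤ 1) :
    c * (B.card : ℝ) / (∫ x in (0:ℝ)..1, ‖fhat B x‖) ^ 2 ≤ L :=
  hh_trick_general c₁ c₂ B c L hL hdom hP1 hP2
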